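/- arXiv:2002.08053 — 4 statements merged into one kernel-verified Lean document; each statement's English description precedes it below -/
import Mathlib

section
/- Let c ≥ 2 and fix y ∈ Fin c. Let ℓ : (Fin c → ℝ) → (Fin c → ℝ) → ℝ be nonnegative such that for every a : Fin c → ℝ and i ∈ Fin c, ℓ(a, e^i) = 0 if and only if a = e^i. Let 𝒮 be a nonempty family of finsets of Fin c such that y ∈ S for every S ∈ 𝒮, and such that for every label ȳ ≠ y there exists S ∈ 𝒮 with ȳ ∉ S. If h : Fin c → ℝ satisfies: for every S ∈ 𝒮 there exists i ∈ S with ℓ(h, e^i) = 0, then h = e^y. -/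
open Function

theorem oneHot_injective {ι R : Type*} [DecidableEq ι] [Zero R] [One R] [NeZero (1 : R)] :
    Injective fun (i : ι) (j : ι) => if j = i then (1 : R) else 0 := by
  intro i k hik
  by_contra hne
  simpa [hne] using congrFun hik i

/-- Since `e` is injective, `b = e i` for a single label `i`, which then lies in every `S ∈ 𝒮`;
the separation hypothesis leaves `y` as the only such label. -/
theorem Function.Injective.eq_apply_of_forall_exists_mem_eq {ι β : Type*} {e : ι → β}
    (he : Injective e) {𝒮 : Set (Finset ι)} (h𝒮 : 𝒮.Nonempty) {y : ι}
    (hsep : ∀ z, z ≠ y → ∃ S ∈ 𝒮, z ∉ S) {b : β} (hb : ∀ S ∈ 𝒮, ∃ i ∈ S, b = e i) :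
    b = e y := by
  obtain ⟨S, hS⟩ := h𝒮
  obtain ⟨i, -, rfl⟩ := hb S hS
  by_cases hiy : i = y
  · rw [hiy]
  obtain ⟨S', hS', hiS'⟩ := hsep i hiy
  obtain ⟨j, hjS', hij⟩ := hb S' hS'
  exact absurd (he hij ▸ hjS') hiS'

theorem identification_of_true_label_general
    (c : ℕ) (y : Fin c)
    (ℓ : (Fin c → ℝ) → (Fin c → ℝ) → ℝ)
    (hℓzero : ∀ (a : Fin c → ℝ) (i : Fin c),
      ℓ a (fun j => if j = i then 1 else 0) = 0 ↔ a = (fun j => if j = i then 1 else 0))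
    (𝒮 : Set (Finset (Fin c))) (h𝒮 : 𝒮.Nonempty)
    (hamb : ∀ ybar : Fin c, ybar ≠ y → ∃ S ∈ 𝒮, ybar ∉ S)
    (h : Fin c → ℝ)
    (hh : ∀ S ∈ 𝒮, ∃ i ∈ S, ℓ h (fun j => if j = i then 1 else 0) = 0) :
    h = (fun j => if j = y then 1 else 0) :=
  oneHot_injective.eq_apply_of_forall_exists_mem_eq h𝒮 hamb fun S hS =>
    (hh S hS).imp fun i ⟨hiS, hzero⟩ => ⟨hiS, (hℓzero h i).mp hzero⟩

/-- The identification step in the proof of Theorem 1: under the small ambiguity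
degree condition, a vector achieving zero loss against some one-hot vector of each
candidate label set must be the one-hot vector of the true label `y`. -/
theorem identification_of_true_label
    (c : ℕ) (hc : 2 ≤ c) (y : Fin c)
    (ℓ : (Fin c → ℝ) → (Fin c → ℝ) → ℝ)
    (hℓnonneg : ∀ a b, 0 ≤ ℓ a b)
    (hℓzero : ∀ (a : Fin c → ℝ) (i : Fin c),
      ℓ a (fun j => if j = i then 1 else 0) = 0 ↔ a = (fun j => if j = i then 1 else 0))
    (𝒮 : Set (Finset (Fin c))) (h𝒮 : 𝒮.Nonempty)
    (hy : ∀ S ∈ 𝒮, y ∈ S)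
    (hamb : ∀ ybar : Fin c, ybar ≠ y → ∃ S ∈ 𝒮, ybar ∉ S)
    (h : Fin c → ℝ)
    (hh : ∀ S ∈ 𝒮, ∃ i ∈ S, ℓ h (fun j => if j = i then 1 else 0) = 0) :
    h = (fun j => if j = y then 1 else 0) :=
  identification_of_true_label_general c y ℓ hℓzero 𝒮 h𝒮 hamb h hh
end

section
/- Let n be a positive integer, let ι be a nonempty finite type, and let f₁, f₂ : ι → Fin n → ℝ. Then Rad(fun g i => min (f₁ g i) (f₂ g i)) ≤ Rad(f₁) + Rad(f₂), where for h : ι → Fin n → ℝ, Rad(h) := (1/2^n) · ∑_{σ : Fin n → Bool} max_{g ∈ ι} (1/n) · ∑_{i} ε_σ(i) · h g i, and ε_σ(i) = 1 if σ i = true and ε_σ(i) = −1 otherwise. -/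
open Finset

/-- The empirical Rademacher average of a family `h : ι → Fin n → ℝ`. -/
noncomputable def rad {ι : Type*} [Fintype ι] [Nonempty ι] (n : ℕ)
    (h : ι → Fin n → ℝ) : ℝ :=
  (1 / 2 ^ n) * ∑ σ : Fin n → Bool,
    Finset.univ.sup' Finset.univ_nonempty fun g =>
      (1 / n : ℝ) * ∑ i, (if σ i then (1 : ℝ) else -1) * h g i

/-!
Write `min a b = (a + b - |a - b|) / 2`. Unnormalised Rademacher sums are subadditive, positively
homogeneous and invariant under `f ↦ -f` (flip all signs), so the claim reduces to
`Rad |f₁ - f₂| ≤ Rad (f₁ - f₂)`. This is the contraction principle for `1`-Lipschitz maps, proved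
one coordinate at a time: pairing each sign vector with its flip at that coordinate reduces it to
`sup (φ v + R) + sup (-φ v + R) ≤ sup (v + R) + sup (-v + R)`, which is checked on the maximisers.
-/

lemma Finset.sup'_add_le_add_sup' {ι α : Type*} [LinearOrder α] [AddCommMonoid α]
    [IsOrderedAddMonoid α] {s : Finset ι} (hs : s.Nonempty) (f g : ι → α) :
    s.sup' hs (f + g) ≤ s.sup' hs f + s.sup' hs g :=
  sup'_le _ _ fun _ hx => add_le_add (le_sup' f hx) (le_sup' g hx)

lemma Fintype.sum_le_sum_of_add_comp_perm_le {α β : Type*} [Fintype α] [AddCommMonoid β]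
    [LinearOrder β] [IsOrderedCancelAddMonoid β] (e : Equiv.Perm α) {F G : α → β}
    (h : ∀ x, F x + F (e x) ≤ G x + G (e x)) : ∑ x, F x ≤ ∑ x, G x := by
  have hsum : ∑ x, F x + ∑ x, F x ≤ ∑ x, G x + ∑ x, G x := by
    calc ∑ x, F x + ∑ x, F x = ∑ x, (F x + F (e x)) := by
          rw [sum_add_distrib, Equiv.sum_comp e]
      _ ≤ ∑ x, (G x + G (e x)) := sum_le_sum fun x _ => h x
      _ = ∑ x, G x + ∑ x, G x := by rw [sum_add_distrib, Equiv.sum_comp e]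
  exact le_of_not_gt fun hlt => (add_lt_add hlt hlt).not_ge hsum

lemma Finset.sup'_comp_add_sup'_neg_comp_le {ι : Type*} {s : Finset ι} (hs : s.Nonempty)
    {φ : ℝ → ℝ} (hφ : LipschitzWith 1 φ) (v R : ι → ℝ) :
    s.sup' hs (fun g => φ (v g) + R g) + s.sup' hs (fun g => -φ (v g) + R g) ≤
      s.sup' hs (fun g => v g + R g) + s.sup' hs (fun g => -v g + R g) := by
  obtain ⟨g₁, hg₁, h₁⟩ := exists_mem_eq_sup' hs fun g => φ (v g) + R g
  obtain ⟨g₂, hg₂, h₂⟩ := exists_mem_eq_sup' hs fun g => -φ (v g) + R g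
  have hφ₁₂ : φ (v g₁) - φ (v g₂) ≤ |v g₁ - v g₂| := by
    simpa [Real.dist_eq] using (le_abs_self _).trans (hφ.dist_le_mul (v g₁) (v g₂))
  have := le_sup' (fun g => v g + R g) hg₁
  have := le_sup' (fun g => v g + R g) hg₂
  have := le_sup' (fun g => -v g + R g) hg₁
  have := le_sup' (fun g => -v g + R g) hg₂
  rw [h₁, h₂]
  cases abs_cases (v g₁ - v g₂) <;> linarith

def flipAt {κ : Type*} [DecidableEq κ] (i : κ) : Equiv.Perm (κ → Bool) :=
  Function.Involutive.toPerm (fun σ => Function.update σ i (!σ i)) fun σ => by simp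

@[simp]
lemma flipAt_apply_self {κ : Type*} [DecidableEq κ] (i : κ) (σ : κ → Bool) :
    flipAt i σ i = !σ i :=
  Function.update_self i _ σ

lemma flipAt_apply_of_ne {κ : Type*} [DecidableEq κ] {i j : κ} (h : j ≠ i) (σ : κ → Bool) :
    flipAt i σ j = σ j :=
  Function.update_of_ne h _ σ

section Rademacher

variable {ι κ : Type*} [Fintype ι] [Nonempty ι] [Fintype κ] [DecidableEq κ]

noncomputable def radSum (h : ι → κ → ℝ) : ℝ :=
  ∑ σ : κ → Bool, univ.sup' univ_nonempty fun g => ∑ i, (if σ i then (1 : ℝ) else -1) * h g i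

lemma radSum_add_le (f g : ι → κ → ℝ) : radSum (f + g) ≤ radSum f + radSum g := by
  rw [radSum, radSum, radSum, ← sum_add_distrib]
  refine sum_le_sum fun σ _ => ?_
  simp only [Pi.add_apply, mul_add, sum_add_distrib]
  exact sup'_add_le_add_sup' _ _ _

lemma radSum_smul {c : ℝ} (hc : 0 ≤ c) (f : ι → κ → ℝ) : radSum (c • f) = c * radSum f := by
  simp only [radSum, mul_sum, mul₀_sup' hc]
  simp

lemma radSum_neg (f : ι → κ → ℝ) : radSum (-f) = radSum f := by
  rw [radSum, radSum, ← (Equiv.piCongrRight fun _ : κ => Equiv.boolNot).sum_comp]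
  refine sum_congr rfl fun σ _ => congrArg _ (funext fun g => sum_congr rfl fun i _ => ?_)
  cases hσ : σ i <;> simp [hσ]

lemma radSum_sub_le (f g : ι → κ → ℝ) : radSum (f - g) ≤ radSum f + radSum g := by
  simpa only [sub_eq_add_neg, radSum_neg] using radSum_add_le f (-g)

lemma radSum_le_of_contract_at {f h : ι → κ → ℝ} (i : κ) {φ : ℝ → ℝ} (hφ : LipschitzWith 1 φ)
    (hi : ∀ g, h g i = φ (f g i)) (hne : ∀ g j, j ≠ i → h g j = f g j) :
    radSum h ≤ radSum f := by
  set R : (κ → Bool) → ι → ℝ :=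
    fun σ g => ∑ j ∈ univ.erase i, (if σ j then (1 : ℝ) else -1) * f g j
  have hsplit : ∀ u : ι → κ → ℝ, (∀ g j, j ≠ i → u g j = f g j) → ∀ σ g,
      ∑ j, (if σ j then (1 : ℝ) else -1) * u g j = (if σ i then 1 else -1) * u g i + R σ g := by
    intro u hu σ g
    rw [← add_sum_erase _ _ (mem_univ i)]
    exact congrArg _ (sum_congr rfl fun j hj => by rw [hu g j (ne_of_mem_erase hj)])
  have hR : ∀ σ, R (flipAt i σ) = R σ := fun σ => funext fun g =>
    sum_congr rfl fun j hj => by rw [flipAt_apply_of_ne (ne_of_mem_erase hj)]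
  refine Fintype.sum_le_sum_of_add_comp_perm_le (flipAt i) fun σ => ?_
  simp only [hsplit h hne, hsplit f (fun _ _ _ => rfl), hR, hi, flipAt_apply_self]
  have := sup'_comp_add_sup'_neg_comp_le univ_nonempty hφ (fun g => f g i) (R σ)
  cases σ i <;>
    simp only [Bool.false_eq_true, Bool.not_false, Bool.not_true, ↓reduceIte, neg_mul, one_mul] <;>
    linarith

lemma radSum_comp_le (φ : κ → ℝ → ℝ) (hφ : ∀ i, LipschitzWith 1 (φ i)) (f : ι → κ → ℝ) :
    radSum (fun g i => φ i (f g i)) ≤ radSum f := by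
  suffices ∀ T : Finset κ, radSum (fun g i => if i ∈ T then φ i (f g i) else f g i) ≤ radSum f by
    simpa using this univ
  intro T
  induction T using Finset.induction_on with
  | empty => simp
  | insert i T hi ih =>
    refine le_trans (radSum_le_of_contract_at i (hφ i) (fun g => ?_) (fun g j hj => ?_)) ih
    · simp [hi]
    · simp [hj]

lemma radSum_inf_le (f₁ f₂ : ι → κ → ℝ) : radSum (f₁ ⊓ f₂) ≤ radSum f₁ + radSum f₂ := by
  have hmin : f₁ ⊓ f₂ = (1 / 2 : ℝ) • (f₁ + f₂ - |f₁ - f₂|) := by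
    ext g i
    simp only [Pi.inf_apply, Pi.smul_apply, Pi.sub_apply, Pi.add_apply, Pi.abs_apply, smul_eq_mul]
    rcases le_total (f₁ g i) (f₂ g i) with h | h
    · rw [inf_of_le_left h, abs_of_nonpos (sub_nonpos.2 h)]; ring
    · rw [inf_of_le_right h, abs_of_nonneg (sub_nonneg.2 h)]; ring
  have habs : radSum |f₁ - f₂| ≤ radSum (f₁ - f₂) :=
    radSum_comp_le (fun _ => abs) (fun _ => lipschitzWith_one_norm) _
  rw [hmin, radSum_smul (by norm_num)]
  linarith [radSum_sub_le (f₁ + f₂) |f₁ - f₂|, radSum_add_le f₁ f₂, radSum_sub_le f₁ f₂]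

lemma rad_eq_mul_radSum (n : ℕ) (h : ι → Fin n → ℝ) :
    rad n h = 1 / 2 ^ n * (1 / n) * radSum h := by
  rw [rad, radSum, mul_assoc, mul_sum (s := univ) (a := 1 / (n : ℝ))]
  simp only [mul₀_sup' (by positivity : (0 : ℝ) ≤ 1 / n)]

end Rademacher

theorem rad_min_le_add_general
    (n : ℕ) (ι : Type*) [Fintype ι] [Nonempty ι]
    (f₁ f₂ : ι → Fin n → ℝ) :
    rad n (fun g i => min (f₁ g i) (f₂ g i)) ≤ rad n f₁ + rad n f₂ := by
  rw [rad_eq_mul_radSum, rad_eq_mul_radSum, rad_eq_mul_radSum, ← mul_add]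
  exact mul_le_mul_of_nonneg_left (radSum_inf_le f₁ f₂) (by positivity)

/-- Two-class case of Lemma 4: the Rademacher average of the pointwise minimum of
two families is bounded by the sum of their Rademacher averages. -/
theorem rad_min_le_add
    (n : ℕ) (hn : 0 < n) (ι : Type*) [Fintype ι] [Nonempty ι]
    (f₁ f₂ : ι → Fin n → ℝ) :
    rad n (fun g i => min (f₁ g i) (f₂ g i)) ≤ rad n f₁ + rad n f₂ :=
  rad_min_le_add_general n ι f₁ f₂
end

section
/- Let n be a positive integer, let ι be a nonempty finite type, and let f₁, f₂ : ι → Fin n → ℝ. Then Rad(fun g i => |f₁ g i − f₂ g i|) ≤ Rad(f₁) + Rad(f₂), where for h : ι → Fin n → ℝ, Rad(h) := (1/2^n) · ∑_{σ : Fin n → Bool} max_{g ∈ ι} (1/n) · ∑_{i} ε_σ(i) · h g i, and ε_σ(i) = 1 if σ i = true and ε_σ(i) = −1 otherwise. -/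
/-!
The absolute value is 1-Lipschitz, so Talagrand's contraction lemma bounds the Rademacher
average of `|f₁ - f₂|` by that of `f₁ - f₂`, which is at most `Rad f₁ + Rad (-f₂)` by
subadditivity of the supremum; and `Rad (-f₂) = Rad f₂` because the sign vector is symmetric.

The contraction is done one coordinate `j` at a time: pairing each sign vector `σ` with the
vector `σ'` that differs from it exactly at `j`, the two suprema for `σ` and `σ'` are of the
form `sup (F + s a) + sup (F - s a)`, and this quantity can only decrease when `a` is
replaced by `ψ ∘ a` with `ψ` 1-Lipschitz.
-/

open Finset

open Function

def boolSign (b : Bool) : ℝ := if b then 1 else -1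

@[simp]
lemma boolSign_not (b : Bool) : boolSign (!b) = -boolSign b := by
  cases b <;> simp [boolSign]

section Rademacher

variable {ι κ : Type*} [Fintype ι] [Nonempty ι] [Fintype κ]

lemma sup'_add_le_add_sup' (u v : ι → ℝ) :
    (univ.sup' univ_nonempty fun g => u g + v g)
      ≤ univ.sup' univ_nonempty u + univ.sup' univ_nonempty v :=
  sup'_le _ _ fun _ hg => add_le_add (le_sup' u hg) (le_sup' v hg)

lemma sup'_add_sup'_sub_le_of_lipschitzWith (F a : ι → ℝ) (s : ℝ) {ψ : ℝ → ℝ}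
    (hψ : LipschitzWith 1 ψ) :
    (univ.sup' univ_nonempty fun g => F g + s * ψ (a g))
        + (univ.sup' univ_nonempty fun g => F g - s * ψ (a g))
      ≤ (univ.sup' univ_nonempty fun g => F g + s * a g)
        + (univ.sup' univ_nonempty fun g => F g - s * a g) := by
  obtain ⟨g₁, -, hg₁⟩ := exists_mem_eq_sup' univ_nonempty fun g => F g + s * ψ (a g)
  obtain ⟨g₂, -, hg₂⟩ := exists_mem_eq_sup' univ_nonempty fun g => F g - s * ψ (a g)
  have hcontract : s * (ψ (a g₁) - ψ (a g₂)) ≤ |s * (a g₁ - a g₂)| := by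
    have hψd := hψ.dist_le_mul (a g₁) (a g₂)
    rw [NNReal.coe_one, one_mul, Real.dist_eq, Real.dist_eq] at hψd
    calc s * (ψ (a g₁) - ψ (a g₂))
        ≤ |s| * |ψ (a g₁) - ψ (a g₂)| := (le_abs_self _).trans_eq (abs_mul _ _)
      _ ≤ |s| * |a g₁ - a g₂| := by gcongr
      _ = |s * (a g₁ - a g₂)| := (abs_mul _ _).symm
  rw [hg₁, hg₂]
  -- `g₁` and `g₂` are played in the order that makes `s * (a g₁ - a g₂)` count positively.
  rcases le_total 0 (s * (a g₁ - a g₂)) with hnonneg | hnonpos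
  · have h₁ := le_sup' (fun g => F g + s * a g) (mem_univ g₁)
    have h₂ := le_sup' (fun g => F g - s * a g) (mem_univ g₂)
    rw [abs_of_nonneg hnonneg] at hcontract
    linarith
  · have h₁ := le_sup' (fun g => F g - s * a g) (mem_univ g₁)
    have h₂ := le_sup' (fun g => F g + s * a g) (mem_univ g₂)
    rw [abs_of_nonpos hnonpos] at hcontract
    linarith

noncomputable def supCorrelation (h : ι → κ → ℝ) (σ : κ → Bool) : ℝ :=
  univ.sup' univ_nonempty fun g => ∑ i, boolSign (σ i) * h g i

noncomputable def rademacherSum [DecidableEq κ] (h : ι → κ → ℝ) : ℝ :=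
  ∑ σ : κ → Bool, supCorrelation h σ

lemma rad_eq_mul_rademacherSum (n : ℕ) (h : ι → Fin n → ℝ) :
    rad n h = 1 / 2 ^ n * (1 / n : ℝ) * rademacherSum h := by
  rw [rad, rademacherSum, mul_assoc, mul_sum _ _ (1 / n : ℝ)]
  refine congrArg _ (sum_congr rfl fun σ _ => ?_)
  rw [supCorrelation, mul₀_sup' (by positivity)]
  rfl

variable [DecidableEq κ]

lemma rademacherSum_add_le (h₁ h₂ : ι → κ → ℝ) :
    rademacherSum (h₁ + h₂) ≤ rademacherSum h₁ + rademacherSum h₂ := by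
  simp only [rademacherSum, ← sum_add_distrib]
  refine sum_le_sum fun σ _ => ?_
  simp only [supCorrelation, Pi.add_apply, mul_add, sum_add_distrib]
  exact sup'_add_le_add_sup' _ _

lemma rademacherSum_neg (h : ι → κ → ℝ) : rademacherSum (-h) = rademacherSum h := by
  have hflip : Involutive fun (σ : κ → Bool) i => !σ i := fun σ => by simp
  refine Fintype.sum_bijective _ hflip.bijective _ _ fun σ => ?_
  simp only [supCorrelation, Pi.neg_apply, boolSign_not, mul_neg, neg_mul]

lemma rademacherSum_sub_le (h₁ h₂ : ι → κ → ℝ) :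
    rademacherSum (h₁ - h₂) ≤ rademacherSum h₁ + rademacherSum h₂ := by
  simpa [sub_eq_add_neg, rademacherSum_neg] using rademacherSum_add_le h₁ (-h₂)

lemma sum_boolSign_mul_update (σ : κ → Bool) (x : κ → ℝ) (j : κ) (b : Bool)
    (y : ℝ) :
    ∑ i, boolSign (update σ j b i) * update x j y i
      = ∑ i ∈ univ.erase j, boolSign (σ i) * x i + boolSign b * y := by
  rw [← sum_erase_add _ _ (mem_univ j), update_self, update_self]
  congr 1
  refine sum_congr rfl fun i hi => ?_
  rw [update_of_ne (ne_of_mem_erase hi), update_of_ne (ne_of_mem_erase hi)]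

lemma supCorrelation_update_add_le (h : ι → κ → ℝ) {ψ : ℝ → ℝ} (hψ : LipschitzWith 1 ψ)
    (j : κ) (σ : κ → Bool) :
    supCorrelation (fun g => update (h g) j (ψ (h g j))) σ
        + supCorrelation (fun g => update (h g) j (ψ (h g j))) (update σ j (!σ j))
      ≤ supCorrelation h σ + supCorrelation h (update σ j (!σ j)) := by
  set F : ι → ℝ := fun g => ∑ i ∈ univ.erase j, boolSign (σ i) * h g i
  have hsame : ∀ (x : ι → ℝ),
      (fun g => ∑ i, boolSign (σ i) * update (h g) j (x g) i)
        = fun g => F g + boolSign (σ j) * x g := fun x => by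
    funext g
    simpa only [update_eq_self] using sum_boolSign_mul_update σ (h g) j (σ j) (x g)
  have hflip : ∀ (x : ι → ℝ),
      (fun g => ∑ i, boolSign (update σ j (!σ j) i) * update (h g) j (x g) i)
        = fun g => F g - boolSign (σ j) * x g := fun x => by
    funext g
    simpa only [boolSign_not, neg_mul, ← sub_eq_add_neg] using
      sum_boolSign_mul_update σ (h g) j (!σ j) (x g)
  have hsame₀ := hsame fun g => h g j
  have hflip₀ := hflip fun g => h g j
  simp only [update_eq_self] at hsame₀ hflip₀
  rw [supCorrelation, supCorrelation, supCorrelation, supCorrelation, hsame, hflip, hsame₀,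
    hflip₀]
  exact sup'_add_sup'_sub_le_of_lipschitzWith F (fun g => h g j) _ hψ

lemma rademacherSum_update_le (h : ι → κ → ℝ) {ψ : ℝ → ℝ} (hψ : LipschitzWith 1 ψ)
    (j : κ) :
    rademacherSum (fun g => update (h g) j (ψ (h g j))) ≤ rademacherSum h := by
  have hflip : Involutive fun (σ : κ → Bool) => update σ j (!σ j) := fun σ => by simp
  have hpaired := sum_le_sum fun σ (_ : σ ∈ univ) => supCorrelation_update_add_le h hψ j σ
  rw [sum_add_distrib, sum_add_distrib,
    Fintype.sum_bijective _ hflip.bijective (fun σ => supCorrelation h (update σ j (!σ j)))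
      (supCorrelation h) fun _ => rfl,
    Fintype.sum_bijective _ hflip.bijective
      (fun σ => supCorrelation (fun g => update (h g) j (ψ (h g j))) (update σ j (!σ j)))
      (supCorrelation _) fun _ => rfl] at hpaired
  rw [rademacherSum, rademacherSum]
  linarith

lemma rademacherSum_comp_le_of_finset (φ : κ → ℝ → ℝ) (hφ : ∀ i, LipschitzWith 1 (φ i))
    (h : ι → κ → ℝ) (S : Finset κ) :
    rademacherSum (fun g i => if i ∈ S then φ i (h g i) else h g i) ≤ rademacherSum h := by
  induction S using Finset.induction_on with
  | empty => simp
  | @insert j S hj ih =>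
    refine le_trans (le_of_eq ?_) ((rademacherSum_update_le _ (hφ j) j).trans ih)
    congr 1
    funext g i
    by_cases hij : i = j
    · subst hij
      simp [hj]
    · simp [hij]

theorem rademacherSum_comp_le (φ : κ → ℝ → ℝ) (hφ : ∀ i, LipschitzWith 1 (φ i))
    (h : ι → κ → ℝ) : rademacherSum (fun g i => φ i (h g i)) ≤ rademacherSum h := by
  simpa using rademacherSum_comp_le_of_finset φ hφ h univ

end Rademacher

theorem rad_abs_sub_le_add_general
    (n : ℕ) (ι : Type*) [Fintype ι] [Nonempty ι]
    (f₁ f₂ : ι → Fin n → ℝ) :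
    rad n (fun g i => |f₁ g i - f₂ g i|) ≤ rad n f₁ + rad n f₂ := by
  rw [rad_eq_mul_rademacherSum, rad_eq_mul_rademacherSum, rad_eq_mul_rademacherSum, ← mul_add]
  refine mul_le_mul_of_nonneg_left ?_ (by positivity)
  calc rademacherSum (fun g i => |f₁ g i - f₂ g i|)
      ≤ rademacherSum (f₁ - f₂) :=
        rademacherSum_comp_le (fun _ => abs) (fun _ => lipschitzWith_one_norm) (f₁ - f₂)
    _ ≤ rademacherSum f₁ + rademacherSum f₂ := rademacherSum_sub_le f₁ f₂

/-- The absolute-difference bound (via Talagrand's contraction): the Rademacher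
average of the family of absolute differences is bounded by the sum of the
Rademacher averages. -/
theorem rad_abs_sub_le_add
    (n : ℕ) (hn : 0 < n) (ι : Type*) [Fintype ι] [Nonempty ι]
    (f₁ f₂ : ι → Fin n → ℝ) :
    rad n (fun g i => |f₁ g i - f₂ g i|) ≤ rad n f₁ + rad n f₂ :=
  rad_abs_sub_le_add_general n ι f₁ f₂
end

section
/- Let (Z, 𝒵) be a measurable space, μ a probability measure on Z, ι a nonempty finite type, M > 0, and φ : ι → Z → ℝ a family of measurable functions with |φ g z| ≤ M for all g ∈ ι and z ∈ Z. Let n be a positive integer. Then ∫ max_{g ∈ ι} (∫ φ g dμ − (1/n) · ∑_{i} φ g (z⃗ i)) d(μ^{⊗n})(z⃗) ≤ 2 · ∫ Rad(fun g i => φ g (z⃗ i)) d(μ^{⊗n})(z⃗), where μ^{⊗n} is the n-fold product measure on Fin n → Z. -/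
/-!
Replacing the population mean by the empirical mean of an independent ghost sample `z'` and
pulling the supremum inside that expectation bounds the left-hand side by
`𝔼 sup_g (1/n) ∑ᵢ (φ g (z' i) - φ g (z i))`. Exchanging `z i` and `z' i` preserves the law of the
pair of samples and only flips the sign of the `i`-th term, so this expectation equals its average
over all sign patterns `σ`; splitting the supremum of a difference into two suprema leaves two
Rademacher averages.
-/

open MeasureTheory Finset

section FinsetSup

variable {ι : Type*} {s : Finset ι}

theorem Finset.sup'_add_le {β : Type*} [SemilatticeSup β] [Add β] [AddLeftMono β]
    [AddRightMono β] (hs : s.Nonempty) (f f' : ι → β) :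
    s.sup' hs (fun g => f g + f' g) ≤ s.sup' hs f + s.sup' hs f' :=
  Finset.sup'_le hs _ fun _ hg => add_le_add (le_sup' f hg) (le_sup' f' hg)

variable {α : Type*} [MeasurableSpace α] {μ : Measure α}

theorem MeasureTheory.Integrable.finset_sup' (hs : s.Nonempty) {f : ι → α → ℝ}
    (hf : ∀ g ∈ s, Integrable (f g) μ) : Integrable (fun x => s.sup' hs fun g => f g x) μ := by
  simpa only [← Finset.sup'_apply] using
    Finset.sup'_induction (p := fun F : α → ℝ => Integrable F μ) hs f
      (fun _ h₁ _ h₂ => h₁.sup h₂) hf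

theorem Finset.sup'_integral_le_integral_sup' (hs : s.Nonempty) {f : ι → α → ℝ}
    (hf : ∀ g ∈ s, Integrable (f g) μ) :
    s.sup' hs (fun g => ∫ x, f g x ∂μ) ≤ ∫ x, s.sup' hs (fun g => f g x) ∂μ :=
  Finset.sup'_le hs _ fun _ hg =>
    integral_mono (hf _ hg) (Integrable.finset_sup' hs hf) fun x => le_sup' (fun g => f g x) hg

end FinsetSup

section SwapCoords

variable {γ α : Type*}

def swapCoords (σ : γ → Bool) (p : (γ → α) × (γ → α)) : (γ → α) × (γ → α) :=
  (fun i => if σ i then p.1 i else p.2 i, fun i => if σ i then p.2 i else p.1 i)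

theorem swapCoords_involutive (σ : γ → Bool) : Function.Involutive (swapCoords (α := α) σ) := by
  intro p
  ext i <;> by_cases h : σ i <;> simp [swapCoords, h]

theorem measurePreserving_swapCoords [MeasurableSpace α] [Fintype γ] (μ : Measure α)
    [SigmaFinite μ] (σ : γ → Bool) :
    MeasurePreserving (swapCoords σ) ((Measure.pi fun _ : γ => μ).prod (Measure.pi fun _ => μ))
      ((Measure.pi fun _ : γ => μ).prod (Measure.pi fun _ => μ)) := by
  have hpairs := measurePreserving_arrowProdEquivProdArrow α α γ (fun _ => μ) (fun _ => μ)
  have hswap := measurePreserving_pi (fun _ : γ => μ.prod μ) (fun _ => μ.prod μ)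
    (f := fun i => if σ i then id else Prod.swap) fun i => by
      cases σ i
      · exact Measure.measurePreserving_swap
      · exact MeasurePreserving.id _
  convert hpairs.comp (hswap.comp hpairs.symm) using 1
  ext p i <;> cases h : σ i <;>
    simp [swapCoords, h, MeasurableEquiv.arrowProdEquivProdArrow, Equiv.arrowProdEquivProdArrow]

theorem integral_comp_swapCoords [MeasurableSpace α] [Fintype γ] (μ : Measure α)
    [SigmaFinite μ] (σ : γ → Bool) (F : (γ → α) × (γ → α) → ℝ) :
    ∫ p, F (swapCoords σ p) ∂((Measure.pi fun _ : γ => μ).prod (Measure.pi fun _ => μ)) =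
      ∫ p, F p ∂((Measure.pi fun _ : γ => μ).prod (Measure.pi fun _ => μ)) := by
  have h := measurePreserving_swapCoords μ σ
  exact h.integral_comp (MeasurableEquiv.ofInvolutive _ (swapCoords_involutive σ)
    h.measurable).measurableEmbedding F

end SwapCoords

section EmpiricalMeans

variable {ι : Type*} [Fintype ι] [Nonempty ι] {n : ℕ}

noncomputable def meanSup (h : ι → Fin n → ℝ) : ℝ :=
  univ.sup' univ_nonempty fun g => (1 / n : ℝ) * ∑ i, h g i

noncomputable def signedMeanSup (σ : Fin n → Bool) (h : ι → Fin n → ℝ) : ℝ :=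
  meanSup fun g i => (if σ i then (1 : ℝ) else -1) * h g i

theorem rad_eq_sum_signedMeanSup (h : ι → Fin n → ℝ) :
    rad n h = (1 / 2 ^ n) * ∑ σ, signedMeanSup σ h :=
  rfl

theorem signedMeanSup_sub_le (σ : Fin n → Bool) (a b : ι → Fin n → ℝ) :
    signedMeanSup σ (a - b) ≤ signedMeanSup σ a + signedMeanSup (fun i => !σ i) b := by
  refine le_of_eq_of_le (Finset.sup'_congr univ_nonempty rfl fun g _ => ?_)
    (Finset.sup'_add_le univ_nonempty _ _)
  simp only [Pi.sub_apply, ← mul_add, ← sum_add_distrib]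
  refine congrArg _ (sum_congr rfl fun i _ => ?_)
  by_cases h : σ i <;> simp [h] <;> ring

theorem meanSup_swapCoords {α : Type*} (f : ι → α → ℝ) (σ : Fin n → Bool)
    (p : (Fin n → α) × (Fin n → α)) :
    meanSup (fun g i => f g ((swapCoords σ p).2 i) - f g ((swapCoords σ p).1 i)) =
      signedMeanSup σ fun g i => f g (p.2 i) - f g (p.1 i) := by
  refine Finset.sup'_congr _ rfl fun g _ => congrArg _ (sum_congr rfl fun i _ => ?_)
  by_cases h : σ i <;> simp [swapCoords, h]

theorem integrable_meanSup {β : Type*} [MeasurableSpace β] {ρ : Measure β}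
    {h : β → ι → Fin n → ℝ} (hh : ∀ g i, Integrable (fun x => h x g i) ρ) :
    Integrable (fun x => meanSup (h x)) ρ :=
  Integrable.finset_sup' _ fun g _ =>
    (integrable_finsetSum _ fun i _ => hh g i).const_mul _

theorem integrable_signedMeanSup {β : Type*} [MeasurableSpace β] {ρ : Measure β}
    (σ : Fin n → Bool) {h : β → ι → Fin n → ℝ} (hh : ∀ g i, Integrable (fun x => h x g i) ρ) :
    Integrable (fun x => signedMeanSup σ (h x)) ρ :=
  integrable_meanSup fun g i => (hh g i).const_mul _

end EmpiricalMeans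

section Symmetrization

variable {Z ι : Type*} [MeasurableSpace Z] {μ : Measure Z} [IsProbabilityMeasure μ]
  [Fintype ι] [Nonempty ι] {φ : ι → Z → ℝ} {n : ℕ}

local notation "μⁿ" => Measure.pi fun _ : Fin n => μ

theorem sup_sub_mean_le_integral_meanSup (hφ : ∀ g, Integrable (φ g) μ) (hn : 0 < n)
    (z : Fin n → Z) :
    (univ.sup' univ_nonempty fun g => (∫ x, φ g x ∂μ) - (1 / n : ℝ) * ∑ i, φ g (z i)) ≤
      ∫ z', meanSup (fun g i => φ g (z' i) - φ g (z i)) ∂μⁿ := by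
  have hterm : ∀ g i, Integrable (fun z' : Fin n → Z => φ g (z' i) - φ g (z i)) μⁿ :=
    fun g i => (integrable_comp_eval (hφ g)).sub (integrable_const _)
  have hmean : ∀ g, (∫ x, φ g x ∂μ) - (1 / n : ℝ) * ∑ i, φ g (z i) =
      ∫ z', (1 / n : ℝ) * ∑ i, (φ g (z' i) - φ g (z i)) ∂μⁿ := by
    intro g
    have hcoord : ∀ i, ∫ z', (φ g (z' i) - φ g (z i)) ∂μⁿ = (∫ x, φ g x ∂μ) - φ g (z i) :=
      fun i => by
        rw [integral_sub (integrable_comp_eval (hφ g)) (integrable_const _),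
          integral_comp_eval (hφ g).aestronglyMeasurable, integral_const, probReal_univ, one_smul]
    rw [integral_const_mul, integral_finsetSum _ fun i _ => hterm g i,
      sum_congr rfl fun i _ => hcoord i, sum_sub_distrib, sum_const, card_univ,
      Fintype.card_fin, nsmul_eq_mul]
    field_simp
  rw [Finset.sup'_congr univ_nonempty rfl fun g _ => hmean g]
  exact Finset.sup'_integral_le_integral_sup' _ fun g _ =>
    (integrable_finsetSum _ fun i _ => hterm g i).const_mul _

theorem integral_sup_sub_mean_le (hφ : ∀ g, Integrable (φ g) μ) (hn : 0 < n) :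
    ∫ z, (univ.sup' univ_nonempty fun g => (∫ x, φ g x ∂μ) - (1 / n : ℝ) * ∑ i, φ g (z i)) ∂μⁿ ≤
      ∫ p, meanSup (fun g i => φ g (p.2 i) - φ g (p.1 i)) ∂(μⁿ.prod μⁿ) := by
  have hsample : ∀ g i, Integrable (fun z : Fin n → Z => φ g (z i)) μⁿ :=
    fun g i => integrable_comp_eval (hφ g)
  have hpairs : Integrable (fun p => meanSup fun g i => φ g (p.2 i) - φ g (p.1 i)) (μⁿ.prod μⁿ) :=
    integrable_meanSup fun g i => ((hsample g i).comp_snd μⁿ).sub ((hsample g i).comp_fst μⁿ)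
  have hdev : Integrable (fun z : Fin n → Z => univ.sup' univ_nonempty fun g =>
      (∫ x, φ g x ∂μ) - (1 / n : ℝ) * ∑ i, φ g (z i)) μⁿ :=
    Integrable.finset_sup' _ fun g _ =>
      (integrable_const _).sub ((integrable_finsetSum _ fun i _ => hsample g i).const_mul _)
  rw [integral_prod _ hpairs]
  exact integral_mono hdev hpairs.integral_prod_left (sup_sub_mean_le_integral_meanSup hφ hn)

theorem integral_meanSup_sub_eq_integral_signedMeanSup (σ : Fin n → Bool) :
    ∫ p, meanSup (fun g i => φ g (p.2 i) - φ g (p.1 i)) ∂(μⁿ.prod μⁿ) =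
      ∫ p, signedMeanSup σ (fun g i => φ g (p.2 i) - φ g (p.1 i)) ∂(μⁿ.prod μⁿ) := by
  simp_rw [← meanSup_swapCoords]
  exact (integral_comp_swapCoords μ σ _).symm

theorem integral_signedMeanSup_sub_le (hφ : ∀ g, Integrable (φ g) μ) (σ : Fin n → Bool) :
    ∫ p, signedMeanSup σ (fun g i => φ g (p.2 i) - φ g (p.1 i)) ∂(μⁿ.prod μⁿ) ≤
      (∫ z, signedMeanSup σ (fun g i => φ g (z i)) ∂μⁿ) +
        ∫ z, signedMeanSup (fun i => !σ i) (fun g i => φ g (z i)) ∂μⁿ := by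
  have hsample : ∀ g i, Integrable (fun z : Fin n → Z => φ g (z i)) μⁿ :=
    fun g i => integrable_comp_eval (hφ g)
  have h₂ := integrable_signedMeanSup σ fun g i => (hsample g i).comp_snd μⁿ
  have h₁ := integrable_signedMeanSup (fun i => !σ i) fun g i => (hsample g i).comp_fst μⁿ
  calc _ ≤ ∫ p, (signedMeanSup σ (fun g i => φ g (p.2 i)) +
          signedMeanSup (fun i => !σ i) fun g i => φ g (p.1 i)) ∂(μⁿ.prod μⁿ) :=
        integral_mono
          (integrable_signedMeanSup σ fun g i =>
            ((hsample g i).comp_snd μⁿ).sub ((hsample g i).comp_fst μⁿ))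
          (h₂.add h₁) fun p => signedMeanSup_sub_le σ _ _
    _ = _ := by
        rw [integral_add h₂ h₁,
          integral_fun_snd fun (z : Fin n → Z) => signedMeanSup σ fun g i => φ g (z i),
          integral_fun_fst fun (z : Fin n → Z) =>
            signedMeanSup (fun i => !σ i) fun g i => φ g (z i)]
        simp

theorem integral_meanSup_sub_le_two_mul_integral_rad (hφ : ∀ g, Integrable (φ g) μ) :
    ∫ p, meanSup (fun g i => φ g (p.2 i) - φ g (p.1 i)) ∂(μⁿ.prod μⁿ) ≤
      2 * ∫ z, rad n (fun g i => φ g (z i)) ∂μⁿ := by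
  set E : (Fin n → Bool) → ℝ := fun σ => ∫ z, signedMeanSup σ (fun g i => φ g (z i)) ∂μⁿ
  have hnot : Function.Involutive fun (σ : Fin n → Bool) i => !σ i :=
    fun σ => funext fun i => Bool.not_not (σ i)
  have hflip : ∑ σ : Fin n → Bool, E (fun i => !σ i) = ∑ σ, E σ :=
    Fintype.sum_bijective _ hnot.bijective _ _ fun _ => rfl
  calc _ = (1 / 2 ^ n) * ∑ σ : Fin n → Bool,
        ∫ p, signedMeanSup σ (fun g i => φ g (p.2 i) - φ g (p.1 i)) ∂(μⁿ.prod μⁿ) := by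
        simp [← integral_meanSup_sub_eq_integral_signedMeanSup]
    _ ≤ (1 / 2 ^ n) * ∑ σ, (E σ + E fun i => !σ i) := by
        gcongr with σ
        exact integral_signedMeanSup_sub_le hφ σ
    _ = 2 * ((1 / 2 ^ n) * ∑ σ, E σ) := by
        rw [sum_add_distrib, hflip]
        ring
    _ = 2 * ∫ z, rad n (fun g i => φ g (z i)) ∂μⁿ := by
        simp_rw [rad_eq_sum_signedMeanSup]
        rw [integral_const_mul, integral_finsetSum _ fun σ _ =>
          integrable_signedMeanSup σ fun g i => integrable_comp_eval (hφ g)]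

end Symmetrization

theorem symmetrization_inequality_general
    {Z : Type*} [MeasurableSpace Z] (μ : Measure Z) [IsProbabilityMeasure μ]
    (ι : Type*) [Fintype ι] [Nonempty ι]
    (M : ℝ)
    (φ : ι → Z → ℝ) (hmeas : ∀ g : ι, Measurable (φ g))
    (hbound : ∀ (g : ι) (z : Z), |φ g z| ≤ M)
    (n : ℕ) (hn : 0 < n) :
    (∫ zvec, (Finset.univ.sup' Finset.univ_nonempty fun g : ι =>
          (∫ z, φ g z ∂μ) - (1 / n : ℝ) * ∑ i, φ g (zvec i))
        ∂(Measure.pi fun _ : Fin n => μ)) ≤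
      2 * ∫ zvec, rad n (fun g i => φ g (zvec i))
        ∂(Measure.pi fun _ : Fin n => μ) := by
  have hφ : ∀ g, Integrable (φ g) μ := fun g =>
    Integrable.of_bound (hmeas g).aestronglyMeasurable M (ae_of_all _ fun z => hbound g z)
  exact (integral_sup_sub_mean_le hφ hn).trans (integral_meanSup_sub_le_two_mul_integral_rad hφ)

/-- Symmetrization inequality (used in the proof of Lemma 3), for a finite
function class: the expected maximal deviation between population and empirical
means is at most twice the expected Rademacher average. -/
theorem symmetrization_inequality
    {Z : Type*} [MeasurableSpace Z] (μ : Measure Z) [IsProbabilityMeasure μ]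
    (ι : Type*) [Fintype ι] [Nonempty ι]
    (M : ℝ) (hM : 0 < M)
    (φ : ι → Z → ℝ) (hmeas : ∀ g : ι, Measurable (φ g))
    (hbound : ∀ (g : ι) (z : Z), |φ g z| ≤ M)
    (n : ℕ) (hn : 0 < n) :
    (∫ zvec, (Finset.univ.sup' Finset.univ_nonempty fun g : ι =>
          (∫ z, φ g z ∂μ) - (1 / n : ℝ) * ∑ i, φ g (zvec i))
        ∂(Measure.pi fun _ : Fin n => μ)) ≤
      2 * ∫ zvec, rad n (fun g i => φ g (zvec i))
        ∂(Measure.pi fun _ : Fin n => μ) :=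
  symmetrization_inequality_general μ ι M φ hmeas hbound n hn
end
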